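/- arXiv:1211.4670 — 3 statements merged into one kernel-verified Lean document; each statement's English description precedes it below -/
import Mathlib

section
/- Let x* be weakly Pareto optimal for a multi-objective problem over Ω, and suppose the image Y = F(Ω) satisfies the convex inclusion condition at F(x*), i.e., there exists a convex set H ⊆ ℝᵖ with Y ⊆ H and H ∩ (F(x*) − ℝᵖ₊₊) = ∅. Then there exists a weight λ ≥ 0, λ ≠ 0, such that x* minimizes ∑ᵢ λᵢ Fᵢ(x) over Ω. -/
/-!
The set `F(x*) - ℝᵖ₊₊` is the open convex orthant `∏ i, (-∞, F(x*)ᵢ)`, so Hahn–Banach separates it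
from `H` by a functional `f` and a level `u`. The orthant is a lower set on which `f` is bounded
above, so `f` is monotone and its coefficients `f eᵢ` are nonnegative; and `F(x*)` lies in the
closure of the orthant, so `f (F x*) ≤ u ≤ f y` for every `y ∈ H ⊇ F(Ω)`.
-/

open Set

theorem LinearMap.nonneg_of_forall_sub_smul_lt {𝕜 E : Type*} [Field 𝕜] [LinearOrder 𝕜]
    [IsStrictOrderedRing 𝕜] [AddCommGroup E] [Module 𝕜 E] (f : E →ₗ[𝕜] 𝕜) {x d : E} {u : 𝕜}
    (h : ∀ t : 𝕜, 0 ≤ t → f (x - t • d) < u) : 0 ≤ f d := by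
  by_contra! hd
  have hxu : f x < u := by simpa using h 0 le_rfl
  have := h ((f x - u) / f d) (div_nonneg_of_nonpos (by linarith) hd.le)
  rw [map_sub, map_smul, smul_eq_mul, div_mul_cancel₀ _ hd.ne] at this
  linarith

theorem LinearMap.map_nonneg_of_isLowerSet {𝕜 E : Type*} [Field 𝕜] [LinearOrder 𝕜]
    [IsStrictOrderedRing 𝕜] [AddCommGroup E] [PartialOrder E] [IsOrderedAddMonoid E]
    [Module 𝕜 E] [PosSMulMono 𝕜 E] (f : E →ₗ[𝕜] 𝕜) {s : Set E} {u : 𝕜}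
    (hs : IsLowerSet s) (hne : s.Nonempty) (hf : ∀ y ∈ s, f y < u) {d : E} (hd : 0 ≤ d) :
    0 ≤ f d := by
  obtain ⟨y, hy⟩ := hne
  exact f.nonneg_of_forall_sub_smul_lt fun t ht =>
    hf _ (hs (sub_le_self y (smul_nonneg ht hd)) hy)

theorem LinearMap.apply_eq_sum_mul_single {ι R : Type*} [Fintype ι] [DecidableEq ι]
    [CommSemiring R] (f : (ι → R) →ₗ[R] R) (y : ι → R) : f y = ∑ i, f (Pi.single i 1) * y i := by
  conv_lhs => rw [pi_eq_sum_univ' y, map_sum]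
  simp only [map_smul, smul_eq_mul, mul_comm]

theorem setOf_eq_sub_of_pos_eq_pi_Iio {ι : Type*} (c : ι → ℝ) :
    {y | ∃ d : ι → ℝ, (∀ i, 0 < d i) ∧ y = c - d} = univ.pi fun i => Iio (c i) := by
  ext y
  simp only [mem_ofPred_eq, mem_univ_pi, mem_Iio]
  constructor
  · rintro ⟨d, hd, rfl⟩ i
    simpa using hd i
  · exact fun hy => ⟨c - y, fun i => sub_pos.mpr (hy i), (sub_sub_cancel c y).symm⟩

theorem exists_nonneg_weights_of_disjoint_pi_Iio {ι : Type*} [Fintype ι] {H : Set (ι → ℝ)}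
    (hconv : Convex ℝ H) (hne : H.Nonempty) {c : ι → ℝ}
    (hdisj : Disjoint (univ.pi fun i => Iio (c i)) H) :
    ∃ lam : ι → ℝ, (∀ i, 0 ≤ lam i) ∧ lam ≠ 0 ∧ ∀ h ∈ H, ∑ i, lam i * c i ≤ ∑ i, lam i * h i := by
  classical
  set O : Set (ι → ℝ) := univ.pi fun i => Iio (c i)
  have hO_lower : IsLowerSet O := fun a b hba ha i _ => (hba i).trans_lt (ha i trivial)
  have hO_ne : O.Nonempty := ⟨c - 1, fun i _ => by simp⟩
  have hc_mem : c ∈ closure O := by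
    rw [closure_pi_set]
    exact fun i _ => by simp
  obtain ⟨f, u, hfO, hfH⟩ := geometric_hahn_banach_open
    (convex_pi fun i _ => convex_Iio (c i)) (isOpen_set_pi finite_univ fun i _ => isOpen_Iio)
    hconv hdisj
  have hfc : f c ≤ u :=
    closure_lt_subset_le f.continuous continuous_const (closure_mono hfO hc_mem)
  set lam : ι → ℝ := fun i => f (Pi.single i 1)
  have hf_eq (y : ι → ℝ) : f y = ∑ i, lam i * y i :=
    (f : (ι → ℝ) →ₗ[ℝ] ℝ).apply_eq_sum_mul_single y
  refine ⟨lam, fun i => (f : (ι → ℝ) →ₗ[ℝ] ℝ).map_nonneg_of_isLowerSet hO_lower hO_ne hfO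
    (Pi.single_nonneg.mpr zero_le_one), ?_, fun h hh => ?_⟩
  · intro hlam
    obtain ⟨y, hy⟩ := hO_ne
    obtain ⟨h, hh⟩ := hne
    have := (hfO y hy).trans_le (hfH h hh)
    simp [hf_eq, hlam] at this
  · rw [← hf_eq, ← hf_eq]
    exact hfc.trans (hfH h hh)

theorem weakly_pareto_imp_weighted_sum_min_general {n p : ℕ}
    (Ω : Set (Fin n → ℝ)) (F : (Fin n → ℝ) → Fin p → ℝ)
    (xstar : Fin n → ℝ) (hx : xstar ∈ Ω)
    (H : Set (Fin p → ℝ)) (hconv : Convex ℝ H)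
    (hYH : F '' Ω ⊆ H)
    (hdisj : H ∩ {y | ∃ d : Fin p → ℝ, (∀ i, 0 < d i) ∧ y = F xstar - d} = ∅) :
    ∃ lam : Fin p → ℝ, (∀ i, 0 ≤ lam i) ∧ lam ≠ 0 ∧
      ∀ x ∈ Ω, ∑ i, lam i * F xstar i ≤ ∑ i, lam i * F x i := by
  rw [setOf_eq_sub_of_pos_eq_pi_Iio, ← disjoint_iff_inter_eq_empty] at hdisj
  obtain ⟨lam, hlam_nonneg, hlam_ne, hmin⟩ := exists_nonneg_weights_of_disjoint_pi_Iio hconv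
    ⟨F xstar, hYH (mem_image_of_mem F hx)⟩ hdisj.symm
  exact ⟨lam, hlam_nonneg, hlam_ne, fun x hxΩ => hmin _ (hYH (mem_image_of_mem F hxΩ))⟩

/-- If `xstar` is weakly Pareto optimal and the image `Y = F(Ω)` satisfies the
convex inclusion condition at `F(xstar)`, then some nonzero nonnegative weight
vector makes `xstar` a minimizer of the weighted-sum problem. -/
theorem weakly_pareto_imp_weighted_sum_min {n p : ℕ}
    (Ω : Set (Fin n → ℝ)) (F : (Fin n → ℝ) → Fin p → ℝ)
    (xstar : Fin n → ℝ) (hx : xstar ∈ Ω)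
    (hweak : ¬ ∃ x ∈ Ω, ∀ i, F x i < F xstar i)
    (H : Set (Fin p → ℝ)) (hconv : Convex ℝ H)
    (hYH : F '' Ω ⊆ H)
    (hdisj : H ∩ {y | ∃ d : Fin p → ℝ, (∀ i, 0 < d i) ∧ y = F xstar - d} = ∅) :
    ∃ lam : Fin p → ℝ, (∀ i, 0 ≤ lam i) ∧ lam ≠ 0 ∧
      ∀ x ∈ Ω, ∑ i, lam i * F xstar i ≤ ∑ i, lam i * F x i :=
  weakly_pareto_imp_weighted_sum_min_general Ω F xstar hx H hconv hYH hdisj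
end

section
/- The 5 × 5 matrix M with rows (1,1,0,0,1), (1,2,1,0,0), (0,1,2,1,0), (0,0,1,2,1), (1,0,0,1,6) is doubly nonnegative (positive semidefinite with nonnegative entries) but not completely positive. -/
open Matrix

/-!
Positive semidefiniteness comes from the factorization `M = Lᵀ diag(1,1,1,1,3) L`, i.e.
`xᵀ M x = (x₀+x₁+x₄)² + (x₁+x₂-x₄)² + (x₂+x₃+x₄)² + x₃² + 3x₄²`.

For non-complete-positivity we separate `M` from the completely positive cone by a copositive
matrix `C`: if `M = V Vᵀ` with `V ≥ 0` then `tr (C M) = ∑ₖ vₖᵀ C vₖ ≥ 0` over the columns `vₖ`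
of `V`. The witness is `D H D`, where `H` is Horn's copositive matrix and
`D = diag(13,10,7,5,3)`, for which `tr (D H D M) = -7`.
-/

def IsCompletelyPositive {n : ℕ} (B : Matrix (Fin n) (Fin n) ℝ) : Prop :=
  ∃ (m : ℕ) (V : Matrix (Fin n) (Fin m) ℝ), (∀ i j, 0 ≤ V i j) ∧ B = V * Vᵀ

def IsCopositive {n : Type*} [Fintype n] (C : Matrix n n ℝ) : Prop :=
  ∀ x : n → ℝ, 0 ≤ x → 0 ≤ x ⬝ᵥ C *ᵥ x

theorem IsCopositive.diagonal_mul_mul_diagonal {n : Type*} [Fintype n] [DecidableEq n]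
    {C : Matrix n n ℝ} (hC : IsCopositive C) {d : n → ℝ} (hd : 0 ≤ d) :
    IsCopositive (diagonal d * C * diagonal d) := by
  intro x hx
  have hmulVec : diagonal d *ᵥ x = d * x := funext (mulVec_diagonal d x)
  have hvecMul : x ᵥ* diagonal d = d * x :=
    funext fun i => (vecMul_diagonal x d i).trans (mul_comm _ _)
  rw [← mulVec_mulVec, ← mulVec_mulVec, dotProduct_mulVec, hmulVec, hvecMul]
  exact hC _ (mul_nonneg hd hx)

theorem transpose_mul_mul_apply_self {m n α : Type*} [Fintype m] [Fintype n] [CommSemiring α]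
    (V : Matrix n m α) (C : Matrix n n α) (k : m) :
    (Vᵀ * C * V) k k = Vᵀ k ⬝ᵥ C *ᵥ Vᵀ k := by
  rw [Matrix.mul_assoc]
  simp [mul_apply, dotProduct, mulVec]

theorem IsCompletelyPositive.trace_mul_nonneg {n : ℕ} {B C : Matrix (Fin n) (Fin n) ℝ}
    (hB : IsCompletelyPositive B) (hC : IsCopositive C) : 0 ≤ trace (C * B) := by
  obtain ⟨m, V, hV, rfl⟩ := hB
  rw [← Matrix.mul_assoc, trace_mul_comm, ← Matrix.mul_assoc, trace]
  refine Finset.sum_nonneg fun k _ => ?_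
  rw [diag_apply, transpose_mul_mul_apply_self]
  exact hC _ fun i => hV i k

def hornMatrix : Matrix (Fin 5) (Fin 5) ℝ :=
  !![1,-1,1,1,-1; -1,1,-1,1,1; 1,-1,1,-1,1; 1,1,-1,1,-1; -1,1,1,-1,1]

def hornForm (a b c d e : ℝ) : ℝ :=
  (a + b + c + d + e) ^ 2 - 4 * (a * b + b * c + c * d + d * e + e * a)

theorem hornForm_rotate (a b c d e : ℝ) : hornForm a b c d e = hornForm b c d e a := by
  unfold hornForm; ring

theorem hornForm_nonneg_of_le {a b c d e : ℝ} (hb : 0 ≤ b) (hc : 0 ≤ c) (hd : 0 ≤ d)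
    (hde : d ≤ e) : 0 ≤ hornForm a b c d e := by
  have hsos : hornForm a b c d e = (a - b + c + d - e) ^ 2 + 4 * b * d + 4 * c * (e - d) := by
    unfold hornForm; ring
  have := sub_nonneg.2 hde
  rw [hsos]
  positivity

/-- The cyclic inequalities `d ≤ e`, `e ≤ a`, `a ≤ b`, `b ≤ c`, `c ≤ d` cannot all fail, and
each one is the hypothesis of `hornForm_nonneg_of_le` for a rotation of the arguments. -/
theorem hornForm_nonneg {a b c d e : ℝ} (ha : 0 ≤ a) (hb : 0 ≤ b) (hc : 0 ≤ c) (hd : 0 ≤ d)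
    (he : 0 ≤ e) : 0 ≤ hornForm a b c d e := by
  rcases le_total d e with hde | hed
  · exact hornForm_nonneg_of_le hb hc hd hde
  rcases le_total e a with hea | hae
  · rw [hornForm_rotate]
    exact hornForm_nonneg_of_le hc hd he hea
  rcases le_total a b with hab | hba
  · rw [hornForm_rotate, hornForm_rotate]
    exact hornForm_nonneg_of_le hd he ha hab
  rcases le_total b c with hbc | hcb
  · rw [hornForm_rotate, hornForm_rotate, hornForm_rotate]
    exact hornForm_nonneg_of_le he ha hb hbc
  · rw [← hornForm_rotate]
    exact hornForm_nonneg_of_le ha hb hc (by linarith)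

theorem hornMatrix_quadratic_form (x : Fin 5 → ℝ) :
    x ⬝ᵥ hornMatrix *ᵥ x = hornForm (x 0) (x 1) (x 2) (x 3) (x 4) := by
  simp [hornMatrix, hornForm, dotProduct, mulVec, Fin.sum_univ_five]
  ring

theorem isCopositive_hornMatrix : IsCopositive hornMatrix := fun x hx => by
  rw [hornMatrix_quadratic_form]
  exact hornForm_nonneg (hx 0) (hx 1) (hx 2) (hx 3) (hx 4)

abbrev dianandaMatrix : Matrix (Fin 5) (Fin 5) ℝ :=
  !![1,1,0,0,1; 1,2,1,0,0; 0,1,2,1,0; 0,0,1,2,1; 1,0,0,1,6]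

theorem posSemidef_dianandaMatrix : dianandaMatrix.PosSemidef := by
  let L : Matrix (Fin 5) (Fin 5) ℝ :=
    !![1,1,0,0,1; 0,1,1,0,-1; 0,0,1,1,1; 0,0,0,1,0; 0,0,0,0,1]
  have hgram : dianandaMatrix = Lᴴ * diagonal ![1, 1, 1, 1, 3] * L := by
    rw [conjTranspose_eq_transpose_of_trivial]
    ext i j
    fin_cases i <;> fin_cases j <;> simp [L, mul_apply, Fin.sum_univ_five] <;> norm_num
  rw [hgram]
  refine PosSemidef.conjTranspose_mul_mul_same (posSemidef_diagonal_iff.2 fun i => ?_) L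
  fin_cases i <;> norm_num

theorem dianandaMatrix_nonneg (i j : Fin 5) : 0 ≤ dianandaMatrix i j := by
  fin_cases i <;> fin_cases j <;> norm_num

theorem trace_hornMatrix_weighted_mul_dianandaMatrix :
    trace (diagonal ![13, 10, 7, 5, 3] * hornMatrix * diagonal ![13, 10, 7, 5, 3] *
      dianandaMatrix) = -7 := by
  simp [hornMatrix, trace, mul_apply, Fin.sum_univ_five]
  norm_num

theorem not_isCompletelyPositive_dianandaMatrix : ¬ IsCompletelyPositive dianandaMatrix := by
  intro hCP
  have hweights : (0 : Fin 5 → ℝ) ≤ ![13, 10, 7, 5, 3] := fun i => by fin_cases i <;> norm_num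
  have h := hCP.trace_mul_nonneg (isCopositive_hornMatrix.diagonal_mul_mul_diagonal hweights)
  rw [trace_hornMatrix_weighted_mul_dianandaMatrix] at h
  norm_num at h

/-- Diananda's counterexample: a 5×5 doubly nonnegative matrix which is not
completely positive. -/
theorem diananda_counterexample :
    (!![(1:ℝ),1,0,0,1; 1,2,1,0,0; 0,1,2,1,0; 0,0,1,2,1; 1,0,0,1,6]).PosSemidef ∧
    (∀ i j, 0 ≤ !![(1:ℝ),1,0,0,1; 1,2,1,0,0; 0,1,2,1,0; 0,0,1,2,1; 1,0,0,1,6] i j) ∧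
    ¬ IsCompletelyPositive
      !![(1:ℝ),1,0,0,1; 1,2,1,0,0; 0,1,2,1,0; 0,0,1,2,1; 1,0,0,1,6] :=
  ⟨posSemidef_dianandaMatrix, dianandaMatrix_nonneg, not_isCompletelyPositive_dianandaMatrix⟩
end

section
/- If the multi-objective problem is convex (each Fᵢ convex and Ω convex) and x* is weakly Pareto optimal, then there exists λ ≥ 0, λ ≠ 0, such that x* minimizes ∑ᵢ λᵢ Fᵢ over Ω. -/
/-!
The set `S = F(Ω) + ℝᵖ₊₊` is open and convex, and weak Pareto optimality says exactly that
`F(x*) ∉ S`. A hyperplane separating `F(x*)` from `S` gives `λ ≠ 0` with `λ ⬝ F(x*) ≤ λ ⬝ y` on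
the closure of `S`. That closure contains every `F(x)` with `x ∈ Ω`, which is the minimality
of `x*`, and every `F(x*) + eᵢ`, which is `λᵢ ≥ 0`.
-/

open Set Filter Topology Matrix

variable {E ι : Type*}

/-- `F(s) + ℝ^ι₊₊`. -/
def strictUpperImage (s : Set E) (F : ι → E → ℝ) : Set (ι → ℝ) :=
  {y | ∃ x ∈ s, ∀ i, F i x < y i}

theorem convex_strictUpperImage [AddCommGroup E] [Module ℝ E] {s : Set E} {F : ι → E → ℝ}
    (hs : Convex ℝ s) (hF : ∀ i, ConvexOn ℝ s (F i)) : Convex ℝ (strictUpperImage s F) := by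
  refine convex_iff_openSegment_subset.2 ?_
  rintro y₁ ⟨x₁, hx₁, h₁⟩ y₂ ⟨x₂, hx₂, h₂⟩ _ ⟨a, b, ha, hb, hab, rfl⟩
  refine ⟨a • x₁ + b • x₂, hs hx₁ hx₂ ha.le hb.le hab, fun i => ?_⟩
  calc F i (a • x₁ + b • x₂) ≤ a • F i x₁ + b • F i x₂ := (hF i).2 hx₁ hx₂ ha.le hb.le hab
    _ < a • y₁ i + b • y₂ i :=
      add_lt_add (smul_lt_smul_of_pos_left (h₁ i) ha) (smul_lt_smul_of_pos_left (h₂ i) hb)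

theorem isOpen_strictUpperImage [Finite ι] (s : Set E) (F : ι → E → ℝ) :
    IsOpen (strictUpperImage s F) := by
  have h_eq : strictUpperImage s F = ⋃ x ∈ s, pi univ fun i => Ioi (F i x) := by
    ext y; simp [strictUpperImage]
  rw [h_eq]
  exact isOpen_biUnion fun x _ => isOpen_set_pi finite_univ fun i _ => isOpen_Ioi

theorem mem_closure_strictUpperImage {s : Set E} {F : ι → E → ℝ} {x : E} (hx : x ∈ s)
    {y : ι → ℝ} (hy : ∀ i, F i x ≤ y i) : y ∈ closure (strictUpperImage s F) := by
  have h_tendsto : Tendsto (fun ε : ℝ => y + Function.const ι ε) (𝓝[>] 0) (𝓝 y) := by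
    have : Continuous fun ε : ℝ => y + Function.const ι ε := by fun_prop
    simpa using (this.tendsto 0).mono_left nhdsWithin_le_nhds
  refine mem_closure_of_tendsto h_tendsto ?_
  filter_upwards [self_mem_nhdsWithin] with ε hε
  exact ⟨x, hx, fun i => lt_add_of_le_of_pos (hy i) hε⟩

theorem exists_ne_zero_forall_dotProduct_le_of_notMem [Fintype ι] {S : Set (ι → ℝ)}
    (hS_conv : Convex ℝ S) (hS_open : IsOpen S) (hS : S.Nonempty) {z : ι → ℝ} (hz : z ∉ S) :
    ∃ lam : ι → ℝ, lam ≠ 0 ∧ ∀ y ∈ closure S, lam ⬝ᵥ z ≤ lam ⬝ᵥ y := by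
  classical
  obtain ⟨f, hf⟩ := geometric_hahn_banach_point_open hS_conv hS_open hz
  set lam := (dotProductEquiv ℝ ι).symm (f : Module.Dual ℝ (ι → ℝ))
  have hf_eq : ∀ y, f y = lam ⬝ᵥ y := fun y =>
    congr($((dotProductEquiv ℝ ι).apply_symm_apply (f : Module.Dual ℝ (ι → ℝ))) y).symm
  refine ⟨lam, fun hlam => ?_, fun y hy => ?_⟩
  · obtain ⟨y, hy⟩ := hS
    simpa [hf_eq, hlam] using hf y hy
  · simpa [hf_eq] using closure_lt_subset_le continuous_const f.continuous (closure_mono hf hy)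

theorem convex_weakly_pareto_scalarization_general {n p : ℕ}
    (Ω : Set (Fin n → ℝ)) (hΩ : Convex ℝ Ω)
    (F : Fin p → (Fin n → ℝ) → ℝ) (hF : ∀ i, ConvexOn ℝ Set.univ (F i))
    (xstar : Fin n → ℝ) (hx : xstar ∈ Ω)
    (hweak : ¬ ∃ x ∈ Ω, ∀ i, F i x < F i xstar) :
    ∃ lam : Fin p → ℝ, (∀ i, 0 ≤ lam i) ∧ lam ≠ 0 ∧
      ∀ x ∈ Ω, ∑ i, lam i * F i xstar ≤ ∑ i, lam i * F i x := by
  obtain ⟨lam, hlam_ne, hlam⟩ := exists_ne_zero_forall_dotProduct_le_of_notMem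
    (convex_strictUpperImage hΩ fun i => (hF i).subset (subset_univ Ω) hΩ)
    (isOpen_strictUpperImage Ω F) ⟨_, xstar, hx, fun i => lt_add_one (F i xstar)⟩
    (z := fun i => F i xstar) hweak
  refine ⟨lam, fun i => ?_, hlam_ne, fun x hxΩ =>
    hlam _ (mem_closure_strictUpperImage hxΩ fun _ => le_rfl)⟩
  have h_shift : (fun j => F j xstar) ≤ (fun j => F j xstar) + Pi.single i 1 :=
    le_add_of_nonneg_right (Pi.single_nonneg.2 zero_le_one)
  simpa [dotProduct_add, dotProduct_single] using hlam _ (mem_closure_strictUpperImage hx h_shift)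

/-- Scalarization for convex multi-objective problems: if `Ω` is convex, each
`Fᵢ` is convex, and `xstar` is weakly Pareto optimal, then there exists a
nonzero nonnegative weight vector `λ` such that `xstar` minimizes
`∑ i, λ i * Fᵢ` over `Ω`. -/
theorem convex_weakly_pareto_scalarization {n p : ℕ} (hp : 0 < p)
    (Ω : Set (Fin n → ℝ)) (hΩ : Convex ℝ Ω)
    (F : Fin p → (Fin n → ℝ) → ℝ) (hF : ∀ i, ConvexOn ℝ Set.univ (F i))
    (xstar : Fin n → ℝ) (hx : xstar ∈ Ω)
    (hweak : ¬ ∃ x ∈ Ω, ∀ i, F i x < F i xstar) :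
    ∃ lam : Fin p → ℝ, (∀ i, 0 ≤ lam i) ∧ lam ≠ 0 ∧
      ∀ x ∈ Ω, ∑ i, lam i * F i xstar ≤ ∑ i, lam i * F i x :=
  convex_weakly_pareto_scalarization_general Ω hΩ F hF xstar hx hweak
end
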